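/- Suppose the MDP is transient and the iterates w^{t,*} (defined by w^{0,*} = −1, w^{t+1,*} = L* w^{t,*}) are bounded below, i.e. there is M ∈ ℝ with (w^{t,*})_s ≥ M for all t, s; let w^{∞,*} := lim_{t→∞} w^{t,*} and let d* : S → A be a deterministic decision rule with w^{∞,*} = B^{d*} w^{∞,*} − b^{d*}. For an infinite sequence π = (d₀,d₁,…) of randomized decision rules, define w^t(π) by the finite-horizon recursion w^0 = −1, w^t(d₀,…,d_{t−1}) = B^{d₀} w^{t−1}(d₁,…,d_{t−1}) − b^{d₀}. Then for every such infinite sequence π, liminf_{t→∞} w^t(π) ≤ w^{∞,*} entrywise, and for the stationary sequence (d*, d*, …) the limit lim_{t→∞} w^t((d*)_∞) exists and equals w^{∞,*}. -/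

import Mathlib

/-!
A randomized rule averages over the actions that `L*` maximizes over, so by induction every
finite-horizon value `w^t(π)` is dominated by the optimal iterate `w^{t,*}`; this gives the
`liminf` bound.

For the stationary policy put `B = B^{d*}`, `b = b^{d*}` and `u = -w^{∞,*} ≥ 0`, so that
`u = B u + b` and `w^t((d*)_∞) = w^{∞,*} + B^t (-1 - w^{∞,*})`; it suffices that `B^t → 0`.
Transience excludes a nonempty set of states that `B` never leaves and from which `b` never exits
(it would make `1` an eigenvalue of `P^{d*}`), and a nonnegative supersolution of `y ≥ B y + b`
vanishes only on such a set. Hence `u > 0`; the decreasing limit `v` of `B^t u` satisfies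
`B v = v`, and if `v ≠ 0` then `u - v / c` with `c = max v/u` would be a nonnegative supersolution
vanishing somewhere. So `B^t u → 0`, which forces `B^t → 0` because `u > 0`.
-/

open Matrix Filter

/-- Spectral radius of a real square matrix: the maximum modulus of its complex eigenvalues. -/
noncomputable def specRad {S : Type*} [Fintype S] [DecidableEq S] (M : Matrix S S ℝ) : ℝ :=
  sSup ((fun z : ℂ => ‖z‖) '' spectrum ℂ (M.map Complex.ofReal))

/-- Exponential transition matrix `B^a` for action `a`. -/
noncomputable def Bmat {S A : Type*} (p r : S → A → Option S → ℝ) (β : ℝ) (a : A) :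
    Matrix S S ℝ :=
  Matrix.of fun s s' => p s a (some s') * Real.exp (-β * r s a (some s'))

/-- Exponential termination vector `b^a` for action `a` (`none` is the sink state `e`). -/
noncomputable def bvec {S A : Type*} (p r : S → A → Option S → ℝ) (β : ℝ) (a : A) : S → ℝ :=
  fun s => p s a none * Real.exp (-β * r s a none)

/-- Optimal exponential Bellman operator `L*`. -/
noncomputable def Lstar {S A : Type*} [Fintype S] [Fintype A] [Nonempty A]
    (p r : S → A → Option S → ℝ) (β : ℝ) (w : S → ℝ) : S → ℝ :=
  fun s => Finset.univ.sup' Finset.univ_nonempty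
    (fun a : A => (Bmat p r β a *ᵥ w) s - bvec p r β a s)

/-- Transition matrix `P^d` (restricted to non-sink states) of a deterministic decision rule. -/
def Pmat {S A : Type*} (p : S → A → Option S → ℝ) (d : S → A) : Matrix S S ℝ :=
  Matrix.of fun s s' => p s (d s) (some s')

/-- Exponential transition matrix `B^d` of a deterministic decision rule. -/
noncomputable def Bdet {S A : Type*} (p r : S → A → Option S → ℝ) (β : ℝ) (d : S → A) :
    Matrix S S ℝ :=
  Matrix.of fun s s' => Bmat p r β (d s) s s'

/-- Exponential termination vector `b^d` of a deterministic decision rule. -/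
noncomputable def bdet {S A : Type*} (p r : S → A → Option S → ℝ) (β : ℝ) (d : S → A) :
    S → ℝ :=
  fun s => bvec p r β (d s) s

/-- Exponential transition matrix `B^d` of a randomized decision rule `d : S → Δ(A)`. -/
noncomputable def Brand {S A : Type*} [Fintype A] (p r : S → A → Option S → ℝ) (β : ℝ)
    (d : S → A → ℝ) : Matrix S S ℝ :=
  Matrix.of fun s s' => ∑ a : A, d s a * (p s a (some s') * Real.exp (-β * r s a (some s')))

/-- Exponential termination vector `b^d` of a randomized decision rule `d : S → Δ(A)`. -/
noncomputable def brand {S A : Type*} [Fintype A] (p r : S → A → Option S → ℝ) (β : ℝ)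
    (d : S → A → ℝ) : S → ℝ :=
  fun s => ∑ a : A, d s a * (p s a none * Real.exp (-β * r s a none))

/-- Finite-horizon exponential value function of a Markov policy `π = (d₀, d₁, …)`:
`w^0 = -1` and `w^t(d₀,…,d_{t-1}) = B^{d₀} w^{t-1}(d₁,…,d_{t-1}) - b^{d₀}`. -/
noncomputable def wpol {S A : Type*} [Fintype S] [Fintype A]
    (p r : S → A → Option S → ℝ) (β : ℝ) : ℕ → (ℕ → S → A → ℝ) → S → ℝ
  | 0, _ => fun _ => -1
  | t + 1, π => Brand p r β (π 0) *ᵥ wpol p r β t (fun k => π (k + 1)) - brand p r β (π 0)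


section NonnegMatrix

variable {S : Type*} [Fintype S] {B : Matrix S S ℝ} {b : S → ℝ}

def IsTrap (B : Matrix S S ℝ) (b : S → ℝ) (Z : Finset S) : Prop :=
  Z.Nonempty ∧ ∀ s ∈ Z, b s = 0 ∧ ∀ s' ∉ Z, B s s' = 0

lemma mulVec_mono_of_nonneg (hB : ∀ s s', 0 ≤ B s s') : Monotone (B *ᵥ ·) :=
  fun _ _ h s => dotProduct_le_dotProduct_of_nonneg_left h (hB s)

lemma pos_of_mulVec_add_le (hB : ∀ s s', 0 ≤ B s s') (hb : 0 ≤ b)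
    (htrap : ∀ Z, ¬ IsTrap B b Z) {y : S → ℝ} (hy : 0 ≤ y) (hsup : B *ᵥ y + b ≤ y) (s : S) :
    0 < y s := by
  classical
  by_contra! hs
  refine htrap (Finset.univ.filter fun z => y z = 0)
    ⟨⟨s, by simpa using le_antisymm hs (hy s)⟩, fun z hz => ?_⟩
  have hyz : y z = 0 := (Finset.mem_filter.1 hz).2
  have hBy : 0 ≤ (B *ᵥ y) z := dotProduct_nonneg_of_nonneg (hB z) hy
  have hbz : 0 ≤ b z := hb z
  have h : (B *ᵥ y) z + b z ≤ 0 := hyz ▸ hsup z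
  refine ⟨by linarith, fun z' hz' => ?_⟩
  have hzero := (Finset.sum_eq_zero_iff_of_nonneg fun s' _ => mul_nonneg (hB z s') (hy s')).1
    (by linarith : (B *ᵥ y) z = 0) z' (Finset.mem_univ _)
  exact (mul_eq_zero.1 hzero).resolve_right (by simpa using hz')

lemma eq_zero_of_mulVec_eq_self (hB : ∀ s s', 0 ≤ B s s') (hb : 0 ≤ b)
    (htrap : ∀ Z, ¬ IsTrap B b Z) {u : S → ℝ} (hu : 0 ≤ u) (hsup : B *ᵥ u + b ≤ u)
    {v : S → ℝ} (hv : 0 ≤ v) (hBv : B *ᵥ v = v) : v = 0 := by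
  have hupos := pos_of_mulVec_add_le hB hb htrap hu hsup
  by_contra! hne
  obtain ⟨s₁, hs₁⟩ := Function.ne_iff.1 hne
  obtain ⟨s₀, -, hmax⟩ :=
    Finset.exists_max_image Finset.univ (fun s => v s / u s) ⟨s₁, Finset.mem_univ _⟩
  set c := v s₀ / u s₀
  have hc : 0 < c := (div_pos ((hv s₁).lt_of_ne' hs₁) (hupos s₁)).trans_le
    (hmax s₁ (Finset.mem_univ _))
  have hy : 0 ≤ u - c⁻¹ • v := fun s => by
    have := (div_le_iff₀ (hupos s)).1 (hmax s (Finset.mem_univ _))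
    rw [Pi.zero_apply, Pi.sub_apply, Pi.smul_apply, smul_eq_mul, sub_nonneg, inv_mul_le_iff₀ hc]
    exact this
  have hsup' : B *ᵥ (u - c⁻¹ • v) + b ≤ u - c⁻¹ • v := by
    rw [Matrix.mulVec_sub, Matrix.mulVec_smul, hBv, sub_add_eq_add_sub]
    exact sub_le_sub_right hsup _
  have hy₀ := pos_of_mulVec_add_le hB hb htrap hy hsup' s₀
  simp only [Pi.sub_apply, Pi.smul_apply, smul_eq_mul, c] at hy₀
  rw [inv_div, div_mul_cancel₀ _ (div_pos_iff_of_pos_right (hupos s₀) |>.1 hc).ne'] at hy₀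
  exact hy₀.ne' (sub_self _)

variable [DecidableEq S]

lemma tendsto_pow_mulVec_zero (hB : ∀ s s', 0 ≤ B s s') (hb : 0 ≤ b)
    (htrap : ∀ Z, ¬ IsTrap B b Z) {u : S → ℝ} (hu : 0 ≤ u) (hsup : B *ᵥ u + b ≤ u) :
    Tendsto (fun t => (B ^ t) *ᵥ u) atTop (nhds 0) := by
  have hBu : B *ᵥ u ≤ u := le_trans (le_add_of_nonneg_right hb) hsup
  have hnonneg : ∀ t, 0 ≤ (B ^ t) *ᵥ u := fun t s =>
    dotProduct_nonneg_of_nonneg (pow_apply_nonneg hB t s) hu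
  have hanti : Antitone fun t => (B ^ t) *ᵥ u := antitone_nat_of_succ_le fun t => by
    rw [pow_succ, ← Matrix.mulVec_mulVec]
    exact mulVec_mono_of_nonneg (pow_apply_nonneg hB t) hBu
  have hlim := tendsto_atTop_ciInf hanti ⟨0, Set.forall_mem_range.2 hnonneg⟩
  have hBv : B *ᵥ ⨅ t, (B ^ t) *ᵥ u = ⨅ t, (B ^ t) *ᵥ u := by
    refine tendsto_nhds_unique
      (((continuous_const.matrix_mulVec continuous_id).tendsto _).comp hlim) ?_
    simpa [Function.comp_def, Matrix.mulVec_mulVec, ← pow_succ'] using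
      hlim.comp (tendsto_add_atTop_nat 1)
  rwa [eq_zero_of_mulVec_eq_self hB hb htrap hu hsup (le_ciInf hnonneg) hBv] at hlim

lemma tendsto_pow_atTop_nhds_zero_of_mulVec_add_le (hB : ∀ s s', 0 ≤ B s s') (hb : 0 ≤ b)
    (htrap : ∀ Z, ¬ IsTrap B b Z) {u : S → ℝ} (hu : 0 ≤ u) (hsup : B *ᵥ u + b ≤ u) :
    Tendsto (fun t => B ^ t) atTop (nhds 0) := by
  have hupos := pos_of_mulVec_add_le hB hb htrap hu hsup
  have hlim := tendsto_pi_nhds.1 (tendsto_pow_mulVec_zero hB hb htrap hu hsup)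
  refine tendsto_pi_nhds.2 fun s => tendsto_pi_nhds.2 fun s' => ?_
  refine squeeze_zero (fun t => pow_apply_nonneg hB t s s') (fun t => ?_)
    (by simpa using (hlim s).div_const (u s'))
  rw [le_div_iff₀ (hupos s')]
  exact Finset.single_le_sum (f := fun j => (B ^ t) s j * u j)
    (fun j _ => mul_nonneg (pow_apply_nonneg hB t s j) (hu j)) (Finset.mem_univ s')

lemma eq_add_pow_mulVec_of_affine {x : ℕ → S → ℝ} {w : S → ℝ}
    (hx : ∀ t, x (t + 1) = B *ᵥ x t - b) (hw : w = B *ᵥ w - b) (t : ℕ) :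
    x t = w + (B ^ t) *ᵥ (x 0 - w) := by
  induction t with
  | zero => simp
  | succ t ih =>
    rw [hx, ih, Matrix.mulVec_add, Matrix.mulVec_mulVec, ← pow_succ']
    nth_rewrite 3 [hw]
    abel

end NonnegMatrix

section Spectral

variable {S : Type*} [Fintype S] [DecidableEq S]

lemma det_one_sub_eq_zero_of_closed_class {R : Type*} [CommRing R] [IsDomain R]
    (P : Matrix S S R) (Z : Finset S) (hZ : Z.Nonempty)
    (hrow : ∀ s ∈ Z, ∑ s' ∈ Z, P s s' = 1) (hout : ∀ s ∈ Z, ∀ s' ∉ Z, P s s' = 0) :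
    (1 - P).det = 0 := by
  rw [(1 - P).twoBlockTriangular_det' (· ∈ Z) fun s hs s' hs' => by
    simp [hout s hs s' hs', Matrix.one_apply_ne (ne_of_mem_of_not_mem hs hs')]]
  refine mul_eq_zero_of_left ?_ _
  -- the blocks of `twoBlockTriangular_det'` carry this instance, not `Finset.Subtype.fintype`
  let : Fintype Z := Subtype.fintype (· ∈ Z)
  rw [← Matrix.exists_mulVec_eq_zero_iff]
  refine ⟨fun _ => 1, ?_, ?_⟩
  · obtain ⟨z, hz⟩ := hZ
    exact fun h => one_ne_zero (congrFun h ⟨z, hz⟩)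
  · ext ⟨s, hs⟩
    simp [Matrix.toSquareBlockProp_def, Matrix.mulVec, dotProduct, Matrix.one_apply,
      ← Finset.sum_subtype Z (fun _ => Iff.rfl) (P s), hrow s hs]

lemma one_le_specRad (P : Matrix S S ℝ) (Z : Finset S) (hZ : Z.Nonempty)
    (hrow : ∀ s ∈ Z, ∑ s' ∈ Z, P s s' = 1) (hout : ∀ s ∈ Z, ∀ s' ∉ Z, P s s' = 0) :
    1 ≤ specRad P := by
  have hdet : (1 - P.map Complex.ofReal).det = 0 :=
    det_one_sub_eq_zero_of_closed_class _ Z hZ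
      (fun s hs => by simp [← Complex.ofReal_sum, hrow s hs])
      fun s hs s' hs' => by simp [hout s hs s' hs']
  have hmem : (1 : ℂ) ∈ spectrum ℂ (P.map Complex.ofReal) := by
    rw [spectrum.mem_iff, map_one, Matrix.isUnit_iff_isUnit_det, hdet]
    exact not_isUnit_zero
  calc (1 : ℝ) = ‖(1 : ℂ)‖ := by simp
    _ ≤ specRad P :=
      le_csSup ((Matrix.finite_spectrum _).image _).bddAbove ⟨1, hmem, rfl⟩

end Spectral

section MDP

variable {S A : Type*} {p r : S → A → Option S → ℝ} {β : ℝ}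

lemma Bmat_apply_nonneg (hp : ∀ s a s', 0 ≤ p s a s') (a : A) (s s' : S) :
    0 ≤ Bmat p r β a s s' :=
  mul_nonneg (hp s a _) (Real.exp_pos _).le

lemma bvec_nonneg (hp : ∀ s a s', 0 ≤ p s a s') (a : A) : 0 ≤ bvec p r β a :=
  fun s => mul_nonneg (hp s a _) (Real.exp_pos _).le

variable [Fintype S]

lemma not_isTrap_of_specRad_lt_one [DecidableEq S] (hp_sum : ∀ s a, ∑ s', p s a s' = 1)
    {d : S → A} (hd : specRad (Pmat p d) < 1) (Z : Finset S) :
    ¬ IsTrap (Bdet p r β d) (bdet p r β d) Z := by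
  rintro ⟨hZ, htrap⟩
  have hout : ∀ s ∈ Z, ∀ s' ∉ Z, Pmat p d s s' = 0 := fun s hs s' hs' => by
    simpa [Bdet, Bmat, Pmat, (Real.exp_pos _).ne'] using (htrap s hs).2 s' hs'
  refine hd.not_ge (one_le_specRad _ Z hZ (fun s hs => ?_) hout)
  have hexit : p s (d s) none = 0 := by
    simpa [bdet, bvec, (Real.exp_pos _).ne'] using (htrap s hs).1
  rw [Finset.sum_subset (Finset.subset_univ Z) fun s' _ hs' => hout s hs s' hs']
  simpa [Fintype.sum_option, hexit, Pmat] using hp_sum s (d s)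

variable [Fintype A]

lemma Brand_mulVec_sub_brand_apply (d : S → A → ℝ) (w : S → ℝ) (s : S) :
    (Brand p r β d *ᵥ w - brand p r β d) s
      = ∑ a, d s a * ((Bmat p r β a *ᵥ w) s - bvec p r β a s) := by
  simp only [Pi.sub_apply, Brand, brand, Bmat, bvec, Matrix.mulVec, dotProduct, Matrix.of_apply,
    Finset.sum_mul, mul_sub, Finset.mul_sum, Finset.sum_sub_distrib]
  rw [Finset.sum_comm]
  congr 1
  exact Finset.sum_congr rfl fun _ _ => Finset.sum_congr rfl fun _ _ => by ring

lemma wpol_succ_deterministic [DecidableEq A] (d : S → A) (t : ℕ) :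
    wpol p r β (t + 1) (fun _ s a => if a = d s then 1 else 0)
      = Bdet p r β d *ᵥ wpol p r β t (fun _ s a => if a = d s then 1 else 0) - bdet p r β d := by
  have hB : Brand p r β (fun s a => if a = d s then 1 else 0) = Bdet p r β d := by
    ext s s'
    simp [Brand, Bdet, Bmat]
  have hb : brand p r β (fun s a => if a = d s then 1 else 0) = bdet p r β d := by
    ext s
    simp [brand, bdet, bvec]
  rw [wpol, hB, hb]

variable [Nonempty A]

lemma Brand_mulVec_sub_brand_le_Lstar {d : S → A → ℝ} (hd₀ : ∀ s a, 0 ≤ d s a)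
    (hd₁ : ∀ s, ∑ a, d s a = 1) (w : S → ℝ) :
    Brand p r β d *ᵥ w - brand p r β d ≤ Lstar p r β w := fun s => by
  rw [Brand_mulVec_sub_brand_apply]
  calc ∑ a, d s a * ((Bmat p r β a *ᵥ w) s - bvec p r β a s)
      ≤ ∑ a, d s a * Lstar p r β w s :=
        Finset.sum_le_sum fun a ha => mul_le_mul_of_nonneg_left
          (Finset.le_sup' (fun a => (Bmat p r β a *ᵥ w) s - bvec p r β a s) ha) (hd₀ s a)
    _ = Lstar p r β w s := by rw [← Finset.sum_mul, hd₁, one_mul]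

lemma Lstar_mono (hp : ∀ s a s', 0 ≤ p s a s') : Monotone (Lstar p r β) :=
  fun _ _ h s => Finset.sup'_mono_fun fun a _ =>
    sub_le_sub_right (mulVec_mono_of_nonneg (Bmat_apply_nonneg hp a) h s) _

lemma Lstar_nonpos (hp : ∀ s a s', 0 ≤ p s a s') {w : S → ℝ} (hw : w ≤ 0) :
    Lstar p r β w ≤ 0 := fun s =>
  Finset.sup'_le _ _ fun a _ => by
    have h₁ : (Bmat p r β a *ᵥ w) s ≤ 0 := by
      simpa using mulVec_mono_of_nonneg (Bmat_apply_nonneg hp a) hw s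
    have h₂ : 0 ≤ bvec p r β a s := bvec_nonneg hp a s
    show (Bmat p r β a *ᵥ w) s - bvec p r β a s ≤ 0
    linarith

lemma Lstar_iterate_nonpos (hp : ∀ s a s', 0 ≤ p s a s') (t : ℕ) :
    (Lstar p r β)^[t] (fun _ => -1) ≤ 0 := by
  induction t with
  | zero => exact fun _ => by norm_num
  | succ t ih => exact Function.iterate_succ_apply' .. ▸ Lstar_nonpos hp ih

lemma wpol_le_Lstar_iterate (hp : ∀ s a s', 0 ≤ p s a s') (t : ℕ) (π : ℕ → S → A → ℝ)
    (hπ₀ : ∀ k s a, 0 ≤ π k s a) (hπ₁ : ∀ k s, ∑ a, π k s a = 1) :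
    wpol p r β t π ≤ (Lstar p r β)^[t] (fun _ => -1) := by
  induction t generalizing π with
  | zero => exact le_rfl
  | succ t ih =>
    rw [Function.iterate_succ_apply']
    exact (Brand_mulVec_sub_brand_le_Lstar (hπ₀ 0) (hπ₁ 0) _).trans
      (Lstar_mono hp (ih _ (fun k => hπ₀ (k + 1)) (fun k => hπ₁ (k + 1))))

end MDP

theorem stmt2_general
    {S A : Type*} [Fintype S] [DecidableEq S] [Fintype A] [Nonempty A]
    [DecidableEq A]
    (p r : S → A → Option S → ℝ) (β : ℝ)
    (hp_nonneg : ∀ s a s', 0 ≤ p s a s')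
    (hp_sum : ∀ s a, ∑ s' : Option S, p s a s' = 1)
    (htransient : ∀ d : S → A, specRad (Pmat p d) < 1)
    (wstar : ℕ → S → ℝ)
    (hws0 : wstar 0 = fun _ => -1)
    (hwssucc : ∀ k, wstar (k + 1) = Lstar p r β (wstar k))
    (winf : S → ℝ)
    (hwinf : Filter.Tendsto wstar Filter.atTop (nhds winf))
    (dstar : S → A)
    (hfix : winf = Bdet p r β dstar *ᵥ winf - bdet p r β dstar) :
    (∀ π : ℕ → S → A → ℝ,
        (∀ k s a, 0 ≤ π k s a) →
        (∀ k s, ∑ a : A, π k s a = 1) →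
        ∀ s, Filter.liminf (fun t => ((wpol p r β t π s : ℝ) : EReal)) Filter.atTop
              ≤ (winf s : EReal)) ∧
    Filter.Tendsto (fun t => wpol p r β t (fun _ s a => if a = dstar s then 1 else 0))
      Filter.atTop (nhds winf) := by
  obtain rfl : wstar = fun t => (Lstar p r β)^[t] fun _ => -1 := funext fun t => by
    induction t with
    | zero => exact hws0
    | succ t ih => rw [hwssucc, ih, Function.iterate_succ_apply']
  refine ⟨fun π hπ₀ hπ₁ s => ?_, ?_⟩
  · calc liminf (fun t => ((wpol p r β t π s : ℝ) : EReal)) atTop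
        ≤ liminf (fun t => (((Lstar p r β)^[t] (fun _ => -1) s : ℝ) : EReal)) atTop :=
          liminf_le_liminf (.of_forall fun t =>
            EReal.coe_le_coe_iff.2 (wpol_le_Lstar_iterate hp_nonneg t π hπ₀ hπ₁ s))
      _ = winf s := (EReal.tendsto_coe.2 (tendsto_pi_nhds.1 hwinf s)).liminf_eq
  · have hu : 0 ≤ -winf :=
      neg_nonneg.2 (le_of_tendsto' hwinf (Lstar_iterate_nonpos hp_nonneg))
    have hsup : Bdet p r β dstar *ᵥ -winf + bdet p r β dstar = -winf := by
      rw [Matrix.mulVec_neg]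
      conv_rhs => rw [hfix]
      abel
    have hpow := tendsto_pow_atTop_nhds_zero_of_mulVec_add_le (B := Bdet p r β dstar)
      (fun s s' => Bmat_apply_nonneg hp_nonneg (dstar s) s s')
      (fun s => bvec_nonneg hp_nonneg (dstar s) s)
      (not_isTrap_of_specRad_lt_one hp_sum (htransient dstar)) hu hsup.le
    rw [funext (eq_add_pow_mulVec_of_affine
      (x := fun t => wpol p r β t fun _ s a => if a = dstar s then 1 else 0)
      (wpol_succ_deterministic dstar) hfix)]
    simpa using tendsto_const_nhds.add
      (((continuous_id.matrix_mulVec continuous_const).tendsto 0).comp hpow)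

theorem stmt2
    {S A : Type*} [Fintype S] [DecidableEq S] [Nonempty S] [Fintype A] [Nonempty A]
    [DecidableEq A]
    (p r : S → A → Option S → ℝ) (β : ℝ) (hβ : 0 < β)
    (hp_nonneg : ∀ s a s', 0 ≤ p s a s')
    (hp_sum : ∀ s a, ∑ s' : Option S, p s a s' = 1)
    (htransient : ∀ d : S → A, specRad (Pmat p d) < 1)
    (wstar : ℕ → S → ℝ)
    (hws0 : wstar 0 = fun _ => -1)
    (hwssucc : ∀ k, wstar (k + 1) = Lstar p r β (wstar k))
    (M : ℝ) (hM : ∀ t s, M ≤ wstar t s)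
    (winf : S → ℝ)
    (hwinf : Filter.Tendsto wstar Filter.atTop (nhds winf))
    (dstar : S → A)
    (hfix : winf = Bdet p r β dstar *ᵥ winf - bdet p r β dstar) :
    (∀ π : ℕ → S → A → ℝ,
        (∀ k s a, 0 ≤ π k s a) →
        (∀ k s, ∑ a : A, π k s a = 1) →
        ∀ s, Filter.liminf (fun t => ((wpol p r β t π s : ℝ) : EReal)) Filter.atTop
              ≤ (winf s : EReal)) ∧
    Filter.Tendsto (fun t => wpol p r β t (fun _ s a => if a = dstar s then 1 else 0))
      Filter.atTop (nhds winf) :=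
  stmt2_general p r β hp_nonneg hp_sum htransient wstar hws0 hwssucc winf hwinf dstar hfix
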